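/- Let G ∈ L¹(ℝ; L²(ℝⁿ)) satisfy e^{σt + ν·x}G ∈ L¹(ℝ × ℝⁿ) for all σ ∈ ℝ and all ν ∈ ℝⁿ with |ν| < c (e.g. G compactly supported in time with e^{c|x|}G ∈ L¹(ℝ; L²(ℝⁿ))). Suppose the entire-in-time extension Ĝ(γ, ξ′, ζ) of the Fourier transform satisfies Ĝ(−|ξ|², ξ) = 0 for all ξ ∈ ℝⁿ. Then Ĝ(−|ξ′|² − ζ², ξ′, ζ) = 0 for all ξ′ ∈ ℝ^{n−1} and all ζ ∈ ℂ with |Im ζ| < c. -/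

import Mathlib

/-! Fix `ξ′`. On the parabola `γ = −|ξ′|² − ζ²` the integrand of `Ĝ` is `e^{i(ζ²t − ζxₙ)}` times
a unimodular factor and `G`, hence entire in `ζ`; for `ζ` near a point of the strip `|Im ζ| < c`
its modulus is at most `e^{S|t| + b|xₙ|}|G|` for some `S` and some `b < c`, which is integrable by
hypothesis. A locally dominated family of holomorphic functions has a holomorphic integral
(Cauchy's estimate bounds the derivatives, so one may differentiate under the integral sign), so
`ζ ↦ Ĝ(−|ξ′|² − ζ², ξ′, ζ)` is holomorphic on the strip. It vanishes on `ℝ`, hence on the whole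
strip by the identity theorem. -/

open MeasureTheory Complex
open scoped RealInnerProductSpace

noncomputable section

/-- The extension `Ĝ(γ, ξ′, ζ)` of the space-time Fourier transform of
`G : ℝ × ℝ^{n+1} → ℂ`, holomorphic in the time frequency `γ` and in the last spatial
frequency `ζ`:
`Ĝ(γ, ξ′, ζ) = (2π)^{−(n+2)/2} ∫ e^{−i(γt + ξ′·x′ + ζ x_n)} G(t,x) d(t,x)`. -/
def GhatExt (n : ℕ) (G : ℝ × EuclideanSpace ℝ (Fin (n + 1)) → ℂ)
    (γ : ℂ) (ξ' : EuclideanSpace ℝ (Fin n)) (ζ : ℂ) : ℂ :=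
  (((2 * Real.pi) ^ (-(((n : ℝ) + 2) / 2)) : ℝ) : ℂ) *
    ∫ p : ℝ × EuclideanSpace ℝ (Fin (n + 1)),
      Complex.exp (-Complex.I *
        (γ * (p.1 : ℂ) + ((∑ i : Fin n, ξ' i * p.2 i.castSucc : ℝ) : ℂ)
          + ζ * ((p.2 (Fin.last n) : ℝ) : ℂ))) * G p

open Filter Metric Topology

section ParametricHolomorphy

variable {α E : Type*} [MeasurableSpace α] {μ : Measure α} [NormedAddCommGroup E]

theorem aestronglyMeasurable_deriv_of_forall_aestronglyMeasurable {𝕜 : Type*}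
    [NontriviallyNormedField 𝕜] [NormedSpace 𝕜 E] {F : 𝕜 → α → E} {z : 𝕜}
    (hF_meas : ∀ w, AEStronglyMeasurable (F w) μ)
    (hF_diff : ∀ᵐ p ∂μ, DifferentiableAt 𝕜 (F · p) z) :
    AEStronglyMeasurable (fun p => deriv (F · p) z) μ :=
  aestronglyMeasurable_of_tendsto_ae (𝓝[≠] z) (f := fun w p => slope (F · p) z w)
    (fun w => ((hF_meas w).sub (hF_meas z)).const_smul _)
    (hF_diff.mono fun _ hp => hasDerivAt_iff_tendsto_slope.1 hp.hasDerivAt)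

variable [NormedSpace ℂ E]

theorem differentiableOn_integral_of_locally_dominated {F : ℂ → α → E} {U : Set ℂ}
    (hU : IsOpen U) (hF_meas : ∀ z, AEStronglyMeasurable (F z) μ)
    (hF_diff : ∀ᵐ p ∂μ, DifferentiableOn ℂ (F · p) U)
    (hF_bound : ∀ z ∈ U, ∃ r > 0, ∃ bound : α → ℝ, Integrable bound μ ∧
      ∀ᵐ p ∂μ, ∀ w ∈ ball z r, ‖F w p‖ ≤ bound p) :
    DifferentiableOn ℂ (fun z => ∫ p, F z p ∂μ) U := by
  intro z hz
  obtain ⟨r, hr, bound, hbound_int, hbound⟩ := hF_bound z hz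
  obtain ⟨R, hR, hRU⟩ := isOpen_iff.1 hU z hz
  set ρ := min r R / 2 with hρ_def
  have hρ : 0 < ρ := by positivity
  have hball : ∀ w ∈ ball z ρ, closedBall w ρ ⊆ ball z r ∩ U := by
    intro w hw y hy
    rw [mem_ball] at hw
    rw [mem_closedBall] at hy
    have hyz : dist y z < min r R := by linarith [dist_triangle y w z]
    exact ⟨mem_ball.2 (hyz.trans_le (min_le_left _ _)),
      hRU (mem_ball.2 (hyz.trans_le (min_le_right _ _)))⟩
  have hF_hasDeriv : ∀ᵐ p ∂μ, ∀ w ∈ ball z ρ, HasDerivAt (F · p) (deriv (F · p) w) w := by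
    filter_upwards [hF_diff] with p hp w hw
    exact (hp.differentiableAt (hU.mem_nhds (hball w hw (mem_closedBall_self hρ.le)).2)).hasDerivAt
  -- Cauchy's estimate on the circle of radius `ρ` turns the bound on `F` into one on its derivative.
  have hF'_bound : ∀ᵐ p ∂μ, ∀ w ∈ ball z ρ, ‖deriv (F · p) w‖ ≤ bound p / ρ := by
    filter_upwards [hF_diff, hbound] with p hp hbp w hw
    refine Complex.norm_deriv_le_of_forall_mem_sphere_norm_le hρ ?_ fun y hy =>
      hbp y (hball w hw (sphere_subset_closedBall hy)).1
    refine DifferentiableOn.diffContOnCl ?_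
    rw [closure_ball w hρ.ne']
    exact hp.mono fun y hy => (hball w hw hy).2
  have hF_int : Integrable (F z) μ :=
    hbound_int.mono' (hF_meas z) (hbound.mono fun p hp => hp z (mem_ball_self hr))
  have hF'_meas : AEStronglyMeasurable (fun p => deriv (F · p) z) μ :=
    aestronglyMeasurable_deriv_of_forall_aestronglyMeasurable hF_meas
      (hF_hasDeriv.mono fun p hp => (hp z (mem_ball_self hρ)).differentiableAt)
  exact (hasDerivAt_integral_of_dominated_loc_of_deriv_le (ball_mem_nhds z hρ)
    (.of_forall hF_meas) hF_int hF'_meas hF'_bound (hbound_int.div_const ρ)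
    hF_hasDeriv).2.differentiableAt.differentiableWithinAt

end ParametricHolomorphy

theorem Real.exp_add_le_of_le_abs {u v a b : ℝ} (hu : u ≤ |a|) (hv : v ≤ |b|) :
    Real.exp (u + v) ≤ (Real.exp a + Real.exp (-a)) * (Real.exp b + Real.exp (-b)) := by
  rw [Real.exp_add]
  gcongr
  · exact (Real.exp_le_exp.2 hu).trans (Real.exp_abs_le a)
  · exact (Real.exp_le_exp.2 hv).trans (Real.exp_abs_le b)

theorem norm_cexp_I_mul_quadratic (ζ : ℂ) (t x : ℝ) :
    ‖cexp (I * (ζ ^ 2 * t - ζ * x))‖ = Real.exp (-(2 * ζ.re * ζ.im) * t + ζ.im * x) := by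
  rw [Complex.norm_exp]
  congr 1
  simp [pow_two]
  ring

theorem differentiableOn_integral_cexp_quadratic {α : Type*} [MeasurableSpace α] {μ : Measure α}
    {t x : α → ℝ} {g : α → ℂ} {c : ℝ} (ht : AEMeasurable t μ) (hx : AEMeasurable x μ)
    (hg : AEStronglyMeasurable g μ)
    (hint : ∀ s v : ℝ, |v| < c → Integrable (fun p => Real.exp (s * t p + v * x p) * ‖g p‖) μ) :
    DifferentiableOn ℂ (fun ζ => ∫ p, cexp (I * (ζ ^ 2 * t p - ζ * x p)) * g p ∂μ)
      {ζ | |ζ.im| < c} := by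
  refine differentiableOn_integral_of_locally_dominated
    (isOpen_lt (continuous_abs.comp continuous_im) continuous_const) (fun ζ => by fun_prop)
    (.of_forall fun p => by fun_prop) fun ζ (hζ : |ζ.im| < c) => ?_
  set ε := (c - |ζ.im|) / 2 with hε_def
  have hε : 0 < ε := by linarith
  set M := ‖ζ‖ + ε
  set S := 2 * M ^ 2
  set b := |ζ.im| + ε
  have hb : |b| < c := by rw [abs_of_nonneg (by positivity)]; linarith
  -- For `w` in the ball of radius `ε` about `ζ`, `|Re w Im w| ≤ M²` and `|Im w| ≤ b < c`.
  refine ⟨ε, hε, fun p => (Real.exp (S * t p) + Real.exp (-(S * t p))) *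
    (Real.exp (b * x p) + Real.exp (-(b * x p))) * ‖g p‖, ?_, .of_forall fun p w hw => ?_⟩
  · have h4 := ((hint S _ hb).add (hint S _ (abs_neg b ▸ hb))).add
      ((hint (-S) _ hb).add (hint (-S) _ (abs_neg b ▸ hb)))
    refine h4.congr (.of_forall fun p => ?_)
    simp only [Pi.add_apply, Real.exp_add, neg_mul]
    ring
  · have hwM : ‖w‖ ≤ M := by
      have := norm_le_norm_add_norm_sub' w ζ
      rw [mem_ball, dist_eq_norm] at hw
      linarith
    have hwb : |w.im| ≤ b := by
      have := abs_im_le_norm (w - ζ)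
      rw [mem_ball, dist_eq_norm] at hw
      rw [sub_im] at this
      linarith [abs_sub_abs_le_abs_sub w.im ζ.im]
    have ht_le : -(2 * w.re * w.im) * t p ≤ |S * t p| := by
      have hre := (abs_re_le_norm w).trans hwM
      have him := (abs_im_le_norm w).trans hwM
      calc _ ≤ |-(2 * w.re * w.im) * t p| := le_abs_self _
        _ = 2 * (|w.re| * |w.im|) * |t p| := by simp only [abs_mul, abs_neg, abs_two]; ring
        _ ≤ 2 * (M * M) * |t p| := by gcongr
        _ = |S * t p| := by rw [abs_mul, abs_of_nonneg (by positivity : 0 ≤ S)]; ring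
    have hx_le : w.im * x p ≤ |b * x p| := (le_abs_self _).trans <| by
      rw [abs_mul, abs_mul]
      exact mul_le_mul_of_nonneg_right (hwb.trans (le_abs_self b)) (abs_nonneg _)
    rw [norm_mul, norm_cexp_I_mul_quadratic]
    exact mul_le_mul_of_nonneg_right (Real.exp_add_le_of_le_abs ht_le hx_le) (norm_nonneg _)

theorem eqOn_zero_of_differentiableOn_strip_of_forall_ofReal {E : Type*} [NormedAddCommGroup E]
    [NormedSpace ℂ E] [CompleteSpace E] {f : ℂ → E} {c : ℝ} (hc : 0 < c)
    (hf : DifferentiableOn ℂ f {z | |z.im| < c}) (hf_real : ∀ x : ℝ, f x = 0) :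
    Set.EqOn f 0 {z | |z.im| < c} := by
  have hopen : IsOpen {z : ℂ | |z.im| < c} :=
    isOpen_lt (continuous_abs.comp continuous_im) continuous_const
  have hconv : Convex ℝ {z : ℂ | |z.im| < c} := by
    have hstrip : {z : ℂ | |z.im| < c} = imLm ⁻¹' Set.Ioo (-c) c := by
      ext z
      simp [abs_lt]
    exact hstrip ▸ (convex_Ioo (-c) c).linear_preimage imLm
  have hreal : Tendsto ((↑) : ℝ → ℂ) (𝓝[≠] 0) (𝓝[≠] 0) := by
    simpa using continuous_ofReal.continuousWithinAt.tendsto_nhdsWithin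
      (x := 0) (t := {0}ᶜ) fun x hx => by simpa using hx
  exact (hf.analyticOnNhd hopen).eqOn_zero_of_preconnected_of_frequently_eq_zero
    hconv.isPreconnected (z₀ := 0) (by simpa using hc)
    (hreal.frequently (.of_forall (f := 𝓝[≠] (0 : ℝ)) hf_real))

/-- let `G` satisfy `e^{σt + ν·x} G ∈ L¹(ℝ × ℝ^{n+1})` for all `σ ∈ ℝ` and all
`ν` with `|ν| < c`. If `Ĝ(−|ξ|², ξ) = 0` for all real frequencies `ξ = (ξ′, ξ_n)`, then
`Ĝ(−|ξ′|² − ζ², ξ′, ζ) = 0` for all `ξ′ ∈ ℝⁿ` and all `ζ ∈ ℂ` with `|Im ζ| < c`. -/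
theorem stmt18 (n : ℕ) (c : ℝ) (hc : 0 < c)
    (G : ℝ × EuclideanSpace ℝ (Fin (n + 1)) → ℂ)
    (hmeas : AEStronglyMeasurable G
      (volume : Measure (ℝ × EuclideanSpace ℝ (Fin (n + 1)))))
    (hint : ∀ σ : ℝ, ∀ ν : EuclideanSpace ℝ (Fin (n + 1)), ‖ν‖ < c →
      Integrable (fun p : ℝ × EuclideanSpace ℝ (Fin (n + 1)) =>
        ((Real.exp (σ * p.1 + ⟪ν, p.2⟫) : ℝ) : ℂ) * G p)
        (volume : Measure (ℝ × EuclideanSpace ℝ (Fin (n + 1)))))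
    (hvanish : ∀ (ξ' : EuclideanSpace ℝ (Fin n)) (ξn : ℝ),
      GhatExt n G ((-(‖ξ'‖ ^ 2 + ξn ^ 2) : ℝ) : ℂ) ξ' (ξn : ℂ) = 0) :
    ∀ (ξ' : EuclideanSpace ℝ (Fin n)) (ζ : ℂ), |ζ.im| < c →
      GhatExt n G (-((‖ξ'‖ ^ 2 : ℝ) : ℂ) - ζ ^ 2) ξ' ζ = 0 := by
  intro ξ' ζ hζ
  set g : ℝ × EuclideanSpace ℝ (Fin (n + 1)) → ℂ := fun p =>
    cexp (((‖ξ'‖ ^ 2 * p.1 - ∑ i : Fin n, ξ' i * p.2 i.castSucc : ℝ) : ℂ) * I) * G p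
  have hg_norm : ∀ p, ‖g p‖ = ‖G p‖ := fun p => by
    rw [norm_mul, norm_exp_ofReal_mul_I, one_mul]
  have hGhat : ∀ ζ : ℂ, GhatExt n G (-((‖ξ'‖ ^ 2 : ℝ) : ℂ) - ζ ^ 2) ξ' ζ =
      (((2 * Real.pi) ^ (-(((n : ℝ) + 2) / 2)) : ℝ) : ℂ) *
        ∫ p, cexp (I * (ζ ^ 2 * p.1 - ζ * p.2 (Fin.last n))) * g p := fun ζ => by
    refine congrArg _ (integral_congr_ae (.of_forall fun p => ?_))
    simp only [g, ← mul_assoc, ← Complex.exp_add]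
    push_cast
    ring_nf
  have hint_last : ∀ s v : ℝ, |v| < c →
      Integrable (fun p => Real.exp (s * p.1 + v * p.2 (Fin.last n)) * ‖g p‖) := by
    intro s v hv
    refine (hint s (EuclideanSpace.single (Fin.last n) v) (by simpa using hv)).norm.congr
      (.of_forall fun p => ?_)
    simp only [norm_mul, hg_norm, Complex.norm_real, Real.norm_eq_abs, Real.abs_exp,
      EuclideanSpace.inner_single_left, starRingEnd_apply, star_trivial]
  have hdiff := (differentiableOn_integral_cexp_quadratic (by fun_prop) (by fun_prop)
    (by fun_prop) hint_last).const_mul (((2 * Real.pi) ^ (-(((n : ℝ) + 2) / 2)) : ℝ) : ℂ)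
  refine eqOn_zero_of_differentiableOn_strip_of_forall_ofReal hc (f := fun ζ =>
    GhatExt n G (-((‖ξ'‖ ^ 2 : ℝ) : ℂ) - ζ ^ 2) ξ' ζ) (by simpa only [hGhat] using hdiff)
    (fun x => ?_) hζ
  convert hvanish ξ' x using 2
  push_cast
  ring
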